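/- arXiv:0908.0522 — 2 statements merged into one kernel-verified Lean document; each statement's English description precedes it below -/
import Mathlib

section
/- Let F = x_0^{s+2} + x_1^{s+2} + ... + x_{N-2}^{s+2} be a Fermat polynomial of degree s+2 in N-1 variables (with N ≥ 3, s ≥ 1). Then the apolar ideal F^⊥ in the ring of constant-coefficient differential operators C[∂_0,...,∂_{N-2}] is generated by the monomials ∂_i∂_j for 0 ≤ i < j ≤ N-2 together with the binomials ∂_i^{s+2} - ∂_j^{s+2} for 0 ≤ i < j ≤ N-2. -/
/-!
Put `m = s + 2`, `F = ∑ₖ xₖ^m`, and let `J` be the ideal generated by the `∂ᵢ∂ⱼ` and the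
`∂ᵢ^m - ∂ⱼ^m`. Since `(PQ)·f = P·(Q·f)`, `F^⊥` is an ideal; it contains the generators, so
`J ⊆ F^⊥`. Writing `c(k, q)` for the coefficient of `∂ₖ^q` in `D`,
`D·F = ∑ₖ ∑_{q<m} c(k, q) m!/(m-q)! xₖ^{m-q} + m! ∑ₖ c(k, m)`, a combination of distinct
monomials, so `D ∈ F^⊥` iff `c(k, q) = 0` for `q < m` and `∑ₖ c(k, m) = 0`. Modulo `J` every
monomial other than the `∂ₖ^q` with `q ≤ m` vanishes (mixed ones are multiples of some `∂ᵢ∂ⱼ`,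
and `∂ₖ^{m+1} = ∂ₖ(∂ₖ^m - ∂ⱼ^m) + ∂ⱼ^{m-1}∂ₖ∂ⱼ`), so such a `D` is congruent to
`∑ₖ c(k, m) ∂ₖ^m = ∑ₖ c(k, m)(∂ₖ^m - ∂ᵢ^m) ∈ J`.
-/

open MvPolynomial

/-- The contraction (apolarity) action: a polynomial `D` in the dual variables
`∂_i` acts on `f ∈ ℂ[x_0,…]` as a constant-coefficient differential operator:
`∂^a · x^b = (∏ᵢ (bᵢ)!/(bᵢ-aᵢ)!) x^{b-a}` if `a ≤ b` componentwise, else `0`. -/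
noncomputable def contract {σ : Type*} (D f : MvPolynomial σ ℂ) : MvPolynomial σ ℂ :=
  (AddMonoidAlgebra.coeff D).sum fun a ca => (AddMonoidAlgebra.coeff f).sum fun b cb =>
    if a ≤ b then
      (ca * cb * (a.prod fun i n => ((b i).descFactorial n : ℂ))) •
        MvPolynomial.monomial (b - a) (1 : ℂ)
    else 0

open Finset

variable {σ : Type*}

noncomputable def contractWeight (a b : σ →₀ ℕ) : ℂ :=
  a.prod fun i n => ((b i).descFactorial n : ℂ)

theorem contractWeight_eq_zero_of_not_le {a b : σ →₀ ℕ} (h : ¬ a ≤ b) :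
    contractWeight a b = 0 := by
  obtain ⟨i, hlt⟩ : ∃ i, b i < a i := by simpa [Finsupp.le_def] using h
  refine Finset.prod_eq_zero (i := i) (Finsupp.mem_support_iff.2 (by omega)) ?_
  simpa using Nat.descFactorial_eq_zero_iff_lt.2 hlt

theorem contractWeight_add_left (a a' b : σ →₀ ℕ) :
    contractWeight (a + a') b = contractWeight a' b * contractWeight a (b - a') := by
  classical
  unfold contractWeight
  rw [Finsupp.prod_of_support_subset (a + a') Finsupp.support_add _ (by simp),
    Finsupp.prod_of_support_subset a' Finset.subset_union_right _ (by simp),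
    Finsupp.prod_of_support_subset a Finset.subset_union_left _ (by simp),
    ← Finset.prod_mul_distrib]
  refine Finset.prod_congr rfl fun i _ => ?_
  rw [Finsupp.add_apply, Finsupp.tsub_apply, ← Nat.cast_mul,
    ← Nat.descFactorial_mul_descFactorial (Nat.le_add_left (a' i) (a i)), Nat.add_sub_cancel,
    mul_comm]

theorem contractWeight_single_single (k : σ) (n m : ℕ) :
    contractWeight (Finsupp.single k n) (Finsupp.single k m) = m.descFactorial n := by
  simp [contractWeight, Finsupp.prod_single_index]

theorem contract_eq_sum (D f : MvPolynomial σ ℂ) :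
    contract D f = (AddMonoidAlgebra.coeff D).sum fun a ca =>
      (AddMonoidAlgebra.coeff f).sum fun b cb =>
        (ca * cb * contractWeight a b) • monomial (b - a) (1 : ℂ) := by
  unfold contract
  refine Finsupp.sum_congr fun a _ => Finsupp.sum_congr fun b _ => ?_
  split_ifs with h
  · rfl
  · rw [contractWeight_eq_zero_of_not_le h, mul_zero, zero_smul]

@[simp]
theorem contract_zero_left (f : MvPolynomial σ ℂ) : contract 0 f = 0 := by
  simp [contract_eq_sum]

@[simp]
theorem contract_zero_right (D : MvPolynomial σ ℂ) : contract D 0 = 0 := by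
  simp [contract_eq_sum]

theorem contract_add_left (D E f : MvPolynomial σ ℂ) :
    contract (D + E) f = contract D f + contract E f := by
  simp only [contract_eq_sum, AddMonoidAlgebra.coeff_add]
  refine Finsupp.sum_add_index' (fun a => by simp) fun a c c' => ?_
  simp only [add_mul, add_smul, Finsupp.sum_add]

theorem contract_add_right (D f g : MvPolynomial σ ℂ) :
    contract D (f + g) = contract D f + contract D g := by
  simp only [contract_eq_sum, AddMonoidAlgebra.coeff_add, ← Finsupp.sum_add]
  refine Finsupp.sum_congr fun a _ => ?_
  refine Finsupp.sum_add_index' (fun b => by simp) fun b c c' => ?_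
  simp only [mul_add, add_mul, add_smul]

theorem contract_smul_right (r : ℂ) (D f : MvPolynomial σ ℂ) :
    contract D (r • f) = r • contract D f := by
  simp only [contract_eq_sum, AddMonoidAlgebra.coeff_smul, Finsupp.smul_sum]
  refine Finsupp.sum_congr fun a _ => ?_
  refine Finsupp.sum_smul_index' (fun b => by simp) |>.trans ?_
  refine Finsupp.sum_congr fun b _ => ?_
  rw [smul_smul, smul_eq_mul]
  ring_nf

theorem contract_sum_right {ι : Type*} (D : MvPolynomial σ ℂ) (s : Finset ι)
    (f : ι → MvPolynomial σ ℂ) : contract D (∑ i ∈ s, f i) = ∑ i ∈ s, contract D (f i) :=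
  map_sum (AddMonoidHom.mk' (contract D) (contract_add_right D)) f s

theorem contract_monomial_monomial (a b : σ →₀ ℕ) (c d : ℂ) :
    contract (monomial a c) (monomial b d) = (c * d * contractWeight a b) • monomial (b - a) 1 := by
  rw [contract_eq_sum, sum_monomial_eq (by simp), sum_monomial_eq (by simp)]

theorem contract_mul (P Q f : MvPolynomial σ ℂ) :
    contract (P * Q) f = contract P (contract Q f) := by
  induction f using MvPolynomial.induction_on' with
  | add f g hf hg => simp only [contract_add_right, hf, hg]
  | monomial b d =>
    induction P using MvPolynomial.induction_on' with
    | add P P' hP hP' => simp only [add_mul, contract_add_left, hP, hP']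
    | monomial a c =>
      induction Q using MvPolynomial.induction_on' with
      | add Q Q' hQ hQ' => simp only [mul_add, contract_add_left, contract_add_right, hQ, hQ']
      | monomial a' c' =>
        rw [monomial_mul, contract_monomial_monomial, contract_monomial_monomial,
          contract_smul_right, contract_monomial_monomial, smul_smul, tsub_tsub, add_comm a',
          contractWeight_add_left]
        ring_nf

def apolarIdeal (f : MvPolynomial σ ℂ) : Ideal (MvPolynomial σ ℂ) where
  carrier := {D | contract D f = 0}
  add_mem' {D E} hD hE := by simp_all [contract_add_left]
  zero_mem' := contract_zero_left f
  smul_mem' P D hD := by simp_all [smul_eq_mul, contract_mul]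

theorem contract_X_pow (D : MvPolynomial σ ℂ) (k : σ) (m : ℕ) :
    contract D (X k ^ m) =
      ∑ q ∈ range (m + 1), (coeff (Finsupp.single k q) D * m.descFactorial q) • X k ^ (m - q) := by
  classical
  induction D using MvPolynomial.induction_on' with
  | add D E hD hE =>
    simp only [contract_add_left, hD, hE, coeff_add, add_mul, add_smul, sum_add_distrib]
  | monomial u c =>
    rw [X_pow_eq_monomial, contract_monomial_monomial]
    simp only [coeff_monomial, ite_mul, zero_mul, ite_smul, zero_smul, X_pow_eq_monomial]
    rcases em (∃ n, u = Finsupp.single k n) with ⟨n, rfl⟩ | hu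
    · simp only [(Finsupp.single_injective k).eq_iff, sum_ite_eq, mem_range,
        contractWeight_single_single, mul_one, ← Finsupp.single_tsub]
      split_ifs with hn
      · rfl
      · simp [Nat.descFactorial_eq_zero_iff_lt.2 (not_lt.1 hn)]
    · have hle : ¬ u ≤ Finsupp.single k m := fun hle =>
        hu ⟨u k, Finsupp.support_subset_singleton.1
          ((Finsupp.support_mono hle).trans Finsupp.support_single_subset)⟩
      rw [contractWeight_eq_zero_of_not_le hle, mul_zero, zero_smul]
      exact (sum_eq_zero fun q _ => if_neg fun h => hu ⟨q, h⟩).symm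

section Coeff

variable {R : Type*} [CommSemiring R]

theorem coeff_single_X_mul_X {i j : σ} (hij : i ≠ j) (k : σ) (q : ℕ) :
    coeff (Finsupp.single k q) (X i * X j : MvPolynomial σ R) = 0 := by
  classical
  rw [X, X, monomial_mul, coeff_monomial, if_neg]
  intro h
  have hi : k = i := by
    by_contra hki
    simpa [Finsupp.single_apply, hij, hki] using DFunLike.congr_fun h i
  have hj : k = j := by
    by_contra hkj
    simpa [Finsupp.single_apply, hij.symm, hkj] using DFunLike.congr_fun h j
  exact hij (hi.symm.trans hj)

variable [Fintype σ]

theorem coeff_single_sum_smul_X_pow {m : ℕ} (hm : m ≠ 0) (c : σ → R) (k : σ) (q : ℕ) :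
    coeff (Finsupp.single k q) (∑ l, c l • X l ^ m : MvPolynomial σ R) =
      if q = m then c k else 0 := by
  classical
  simp [coeff_sum, coeff_X_pow, Finsupp.single_eq_single_iff, hm, ite_and, eq_comm]

theorem coeff_single_sum_smul_X_pow_tsub {m q : ℕ} (k : σ) (hq : q < m) (a : σ → ℕ → R)
    (b : R) :
    coeff (Finsupp.single k (m - q))
      (∑ l, ∑ p ∈ range m, a l p • X l ^ (m - p) + b • 1 : MvPolynomial σ R) = a k q := by
  classical
  have hmq : m - q ≠ 0 := Nat.sub_ne_zero_of_lt hq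
  rw [coeff_add, coeff_smul, coeff_one, if_neg (Finsupp.single_ne_zero.2 hmq).symm, smul_zero,
    add_zero, coeff_sum, Fintype.sum_eq_single k, coeff_sum, sum_eq_single q]
  · rw [coeff_smul, coeff_X_pow, if_pos rfl, smul_eq_mul, mul_one]
  · intro p hp hpq
    have : m - p ≠ m - q := by rw [mem_range] at hp; omega
    rw [coeff_smul, coeff_X_pow, if_neg ((Finsupp.single_injective k).ne this), smul_zero]
  · exact fun h => absurd (mem_range.2 hq) h
  · intro l hlk
    refine (coeff_sum _ _ _).trans (sum_eq_zero fun p _ => ?_)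
    have hne : Finsupp.single l (m - p) ≠ Finsupp.single k (m - q) := by
      rw [Ne, Finsupp.single_eq_single_iff]
      exact fun h => h.elim (fun h => hlk h.1) fun h => hmq h.2
    rw [coeff_smul, coeff_X_pow, if_neg hne, smul_zero]

theorem coeff_zero_sum_smul_X_pow_tsub (m : ℕ) (a : σ → ℕ → R) (b : R) :
    coeff 0 (∑ l, ∑ p ∈ range m, a l p • X l ^ (m - p) + b • 1 : MvPolynomial σ R) = b := by
  classical
  rw [coeff_add, coeff_smul, coeff_zero_one, smul_eq_mul, mul_one, coeff_sum,
    sum_eq_zero, zero_add]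
  refine fun l _ => (coeff_sum _ _ _).trans (sum_eq_zero fun p hp => ?_)
  rw [coeff_smul, coeff_X_pow, smul_eq_mul,
    if_neg (Finsupp.single_ne_zero.2 (Nat.sub_ne_zero_of_lt (mem_range.1 hp))), mul_zero]

end Coeff

section Fermat

variable [Fintype σ]

theorem contract_sum_X_pow (D : MvPolynomial σ ℂ) (m : ℕ) :
    contract D (∑ k, X k ^ m) =
      ∑ k, ∑ q ∈ range m, (coeff (Finsupp.single k q) D * m.descFactorial q) • X k ^ (m - q) +
        (m.factorial * ∑ k, coeff (Finsupp.single k m) D) • 1 := by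
  simp only [contract_sum_right, contract_X_pow, sum_range_succ, sum_add_distrib,
    Nat.sub_self, pow_zero, Nat.descFactorial_self, ← sum_smul, mul_sum, mul_comm]

theorem contract_sum_X_pow_eq_zero_iff (D : MvPolynomial σ ℂ) (m : ℕ) :
    contract D (∑ k, X k ^ m) = 0 ↔
      (∀ k, ∀ q < m, coeff (Finsupp.single k q) D = 0) ∧
        ∑ k, coeff (Finsupp.single k m) D = 0 := by
  rw [contract_sum_X_pow]
  refine ⟨fun h => ⟨fun k q hq => ?_, ?_⟩, fun ⟨hlow, htop⟩ => ?_⟩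
  · have hcoeff := coeff_single_sum_smul_X_pow_tsub k hq
      (fun k q => coeff (Finsupp.single k q) D * m.descFactorial q)
      (m.factorial * ∑ k, coeff (Finsupp.single k m) D)
    rw [h, coeff_zero, eq_comm, mul_eq_zero] at hcoeff
    exact hcoeff.resolve_right
      (Nat.cast_ne_zero.2 (Nat.descFactorial_eq_zero_iff_lt.not.2 (by omega)))
  · have hcoeff := coeff_zero_sum_smul_X_pow_tsub m
      (fun k q => coeff (Finsupp.single k q) D * m.descFactorial q)
      (m.factorial * ∑ k, coeff (Finsupp.single k m) D)
    rw [h, coeff_zero, eq_comm, mul_eq_zero] at hcoeff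
    exact hcoeff.resolve_left (Nat.cast_ne_zero.2 m.factorial_ne_zero)
  · rw [htop, mul_zero, zero_smul, add_zero]
    exact sum_eq_zero fun k _ => sum_eq_zero fun q hq => by
      rw [hlow k q (mem_range.1 hq), zero_mul, zero_smul]

end Fermat

def fermatApolarGenerators (σ : Type*) (m : ℕ) : Set (MvPolynomial σ ℂ) :=
  {P | ∃ i j : σ, i ≠ j ∧ (P = X i * X j ∨ P = X i ^ m - X j ^ m)}

section Generators

variable {m : ℕ}

theorem X_mul_X_mem_span {i j : σ} (hij : i ≠ j) :
    X i * X j ∈ Ideal.span (fermatApolarGenerators σ m) :=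
  Ideal.subset_span ⟨i, j, hij, Or.inl rfl⟩

theorem X_pow_sub_X_pow_mem_span {i j : σ} (hij : i ≠ j) :
    X i ^ m - X j ^ m ∈ Ideal.span (fermatApolarGenerators σ m) :=
  Ideal.subset_span ⟨i, j, hij, Or.inr rfl⟩

theorem monomial_mem_span_of_ne {u : σ →₀ ℕ} {i j : σ} (hij : i ≠ j) (hi : u i ≠ 0)
    (hj : u j ≠ 0) (c : ℂ) : monomial u c ∈ Ideal.span (fermatApolarGenerators σ m) := by
  classical
  refine Ideal.mem_of_dvd _ ?_ (X_mul_X_mem_span hij)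
  rw [X, X, monomial_mul, one_mul, monomial_dvd_monomial]
  refine ⟨Or.inr fun l => ?_, one_dvd c⟩
  rcases eq_or_ne i l with rfl | hil
  · simpa [hij] using Nat.one_le_iff_ne_zero.2 hi
  · rcases eq_or_ne j l with rfl | hjl
    · simpa [hil] using Nat.one_le_iff_ne_zero.2 hj
    · simp [hil, hjl]

theorem X_pow_mem_span_of_lt [Nontrivial σ] (hm : 1 ≤ m) (k : σ) {q : ℕ} (hq : m < q) :
    X k ^ q ∈ Ideal.span (fermatApolarGenerators σ m) := by
  obtain ⟨j, hj⟩ := exists_ne k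
  refine Ideal.mem_of_dvd _ (pow_dvd_pow _ hq) ?_
  have hsplit : (X k ^ (m + 1) : MvPolynomial σ ℂ) =
      X k * (X k ^ m - X j ^ m) + X j ^ (m - 1) * (X k * X j) := by
    obtain ⟨n, rfl⟩ := Nat.exists_eq_add_of_le' hm
    simp only [Nat.add_sub_cancel]
    ring
  rw [hsplit]
  exact add_mem (Ideal.mul_mem_left _ _ (X_pow_sub_X_pow_mem_span hj.symm))
    (Ideal.mul_mem_left _ _ (X_mul_X_mem_span hj.symm))

theorem sum_smul_X_pow_mem_span [Fintype σ] {c : σ → ℂ} (hc : ∑ k, c k = 0) :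
    ∑ k, c k • X k ^ m ∈ Ideal.span (fermatApolarGenerators σ m) := by
  rcases isEmpty_or_nonempty σ with hσ | ⟨⟨i⟩⟩
  · simp
  have hsum : ∑ k, c k • (X k ^ m : MvPolynomial σ ℂ) = ∑ k, c k • (X k ^ m - X i ^ m) := by
    simp only [smul_sub, sum_sub_distrib, ← sum_smul, hc, zero_smul, sub_zero]
  rw [hsum]
  refine sum_mem fun k _ => ?_
  rcases eq_or_ne k i with rfl | hk
  · simp
  · exact Submodule.smul_of_tower_mem _ _ (X_pow_sub_X_pow_mem_span hk)

theorem mem_span_of_coeff_single_eq_zero [Nontrivial σ] (hm : 1 ≤ m) {E : MvPolynomial σ ℂ}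
    (hE : ∀ k, ∀ q ≤ m, coeff (Finsupp.single k q) E = 0) :
    E ∈ Ideal.span (fermatApolarGenerators σ m) := by
  rw [E.as_sum]
  refine sum_mem fun u _ => ?_
  rcases le_or_gt u.support.card 1 with hu | hu
  · obtain ⟨k, q, rfl⟩ := Finsupp.card_support_le_one'.1 hu
    rcases le_or_gt q m with hq | hq
    · rw [hE k q hq, monomial_zero]
      exact zero_mem _
    · rw [← C_mul_X_pow_eq_monomial]
      exact Ideal.mul_mem_left _ _ (X_pow_mem_span_of_lt hm k hq)
  · obtain ⟨i, hi, j, hj, hij⟩ := one_lt_card.1 hu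
    exact monomial_mem_span_of_ne hij (Finsupp.mem_support_iff.1 hi)
      (Finsupp.mem_support_iff.1 hj) _

variable [Fintype σ]

theorem span_fermatApolarGenerators_le :
    Ideal.span (fermatApolarGenerators σ m) ≤ apolarIdeal (∑ k, X k ^ m) := by
  classical
  refine Ideal.span_le.2 ?_
  rintro P ⟨i, j, hij, rfl | rfl⟩ <;>
    refine (contract_sum_X_pow_eq_zero_iff _ m).2 ⟨fun k q hq => ?_, ?_⟩
  · exact coeff_single_X_mul_X hij k q
  · simp [coeff_single_X_mul_X hij]
  · simp [coeff_X_pow, Finsupp.single_eq_single_iff, hq.ne', (Nat.zero_lt_of_lt hq).ne']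
  · rcases eq_or_ne m 0 with rfl | hm <;> simp [coeff_X_pow, Finsupp.single_eq_single_iff, *]

theorem apolarIdeal_sum_X_pow [Nontrivial σ] (hm : 1 ≤ m) :
    apolarIdeal (∑ k, X k ^ m) = Ideal.span (fermatApolarGenerators σ m) := by
  refine le_antisymm (fun D hD => ?_) span_fermatApolarGenerators_le
  obtain ⟨hlow, htop⟩ := (contract_sum_X_pow_eq_zero_iff D m).1 hD
  set c : σ → ℂ := fun k => coeff (Finsupp.single k m) D
  have hrest : D - ∑ k, c k • X k ^ m ∈ Ideal.span (fermatApolarGenerators σ m) := by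
    refine mem_span_of_coeff_single_eq_zero hm fun k q hq => ?_
    rw [coeff_sub, coeff_single_sum_smul_X_pow (by omega)]
    rcases hq.lt_or_eq with hq | rfl
    · rw [if_neg hq.ne, hlow k q hq, sub_zero]
    · rw [if_pos rfl, sub_self]
  simpa only [sub_add_cancel] using add_mem hrest (sum_smul_X_pow_mem_span (c := c) htop)

end Generators

theorem fermat_apolar_ideal_general (N s : ℕ) (hN : 3 ≤ N)
    (F : MvPolynomial (Fin (N - 1)) ℂ)
    (hF : F = ∑ i : Fin (N - 1), X i ^ (s + 2)) :
    ∀ D : MvPolynomial (Fin (N - 1)) ℂ,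
      contract D F = 0 ↔
        D ∈ Ideal.span {P : MvPolynomial (Fin (N - 1)) ℂ |
          ∃ i j : Fin (N - 1), i ≠ j ∧
            (P = X i * X j ∨ P = X i ^ (s + 2) - X j ^ (s + 2))} := by
  subst hF
  have : Nontrivial (Fin (N - 1)) := Fin.nontrivial_iff_two_le.2 (by omega)
  intro D
  exact SetLike.ext_iff.1 (apolarIdeal_sum_X_pow (by omega)) D

/-- For the Fermat polynomial
`F = x_0^{s+2} + ⋯ + x_{N-2}^{s+2}` of degree `s+2` in `N-1` variables
(`N ≥ 3`, `s ≥ 1`), the apolar ideal `F^⊥ = {D | D·F = 0}` in the dual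
polynomial ring `ℂ[∂_0,…,∂_{N-2}]` is generated by the monomials `∂_i ∂_j`
(`i ≠ j`) together with the binomials `∂_i^{s+2} - ∂_j^{s+2}` (`i ≠ j`). -/
theorem fermat_apolar_ideal (N s : ℕ) (hN : 3 ≤ N) (hs : 1 ≤ s)
    (F : MvPolynomial (Fin (N - 1)) ℂ)
    (hF : F = ∑ i : Fin (N - 1), X i ^ (s + 2)) :
    ∀ D : MvPolynomial (Fin (N - 1)) ℂ,
      contract D F = 0 ↔
        D ∈ Ideal.span {P : MvPolynomial (Fin (N - 1)) ℂ |
          ∃ i j : Fin (N - 1), i ≠ j ∧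
            (P = X i * X j ∨ P = X i ^ (s + 2) - X j ^ (s + 2))} :=
  fermat_apolar_ideal_general N s hN F hF
end

section
/- Let S_{a_1,a_2} ⊂ P^{a_1+a_2+1} (a_1 ≥ a_2) be a rational normal surface scroll, identified with F_e (e = a_1 - a_2) embedded by |C_0 + a_1 f|. If a curve C ⊂ S_{a_1,a_2} is s-subcanonical with respect to this embedding (i.e. ω_C ≅ O_C(s)), then C is linearly equivalent to (s+2)C_0 + ((s+1)a_1 - a_2 + 2)f; consequently C admits a degree-(s+2) map to P^1 (it is (s+2)-gonal), its arithmetic genus is p_a(C) = (s+1)(s(a_1+a_2) + 2)/2, and its degree is (s+1)(a_1+a_2) + 2. Moreover C can be chosen smooth if and only if (s+1)a_2 + 2 ≥ a_1. -/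
/-- Intersection form on `Pic(F_e) = ℤ·C₀ ⊕ ℤ·f`. -/
def inter (e : ℤ) (D E : ℤ × ℤ) : ℤ :=
  D.1 * E.2 + D.2 * E.1 - e * D.1 * E.1

/-- Let `S_{a₁,a₂} ⊂ ℙ^{a₁+a₂+1}` (`a₁ ≥ a₂`) be the rational
normal scroll, i.e. `F_e` (`e = a₁ - a₂`) embedded by the hyperplane class
`H = C₀ + a₁f`, with `K = -2C₀ - (2+e)f`.  Let `C ~ αC₀ + βf` be a curve on it
(very ample class), and suppose `C` is `s`-subcanonical: `sH|_C ~ (C + K)|_C`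
(stated via an abstract restriction map `res` to `Pic(C)`, injective on very ample
classes — Lemma `pic`).  Then `C ~ (s+2)C₀ + ((s+1)a₁ - a₂ + 2)f`; consequently
`C·f = s+2` (the ruling cuts a pencil of degree `s+2`, so `C` is `(s+2)`-gonal),
`p_a(C) = (s+1)(s(a₁+a₂)+2)/2` (via adjunction `2p_a - 2 = C·(C+K)`),
`deg C = C·H = (s+1)(a₁+a₂) + 2`, and `C` can be chosen smooth iff
`(s+1)a₂ + 2 ≥ a₁` (criterion: the general member of `|αC₀+βf|` is smooth iff
`β ≥ αe`). -/
theorem subcanonical_curve_on_scroll (a₁ a₂ s : ℤ) (h21 : a₂ ≤ a₁) (h2 : 0 ≤ a₂)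
    (hs : 1 ≤ s) (e : ℤ) (he : e = a₁ - a₂)
    (PicC : Type*) [AddCommGroup PicC] (res : ℤ × ℤ →+ PicC)
    (α β : ℤ) (hα : 0 < α) (hβ : α * e < β)
    (hinj : ∀ D E : ℤ × ℤ, 0 < D.1 → D.1 * e < D.2 → 0 < E.1 → E.1 * e < E.2 →
      res D = res E → D = E)
    (hsub : res (s • ((1 : ℤ), a₁)) = res ((α, β) + (-2, -2 - e))) :
    (α, β) = (s + 2, (s + 1) * a₁ - a₂ + 2) ∧
    inter e (α, β) (0, 1) = s + 2 ∧
    inter e (α, β) ((α, β) + (-2, -2 - e)) + 2 = (s + 1) * (s * (a₁ + a₂) + 2) ∧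
    inter e (α, β) (1, a₁) = (s + 1) * (a₁ + a₂) + 2 ∧
    ((s + 2) * e ≤ (s + 1) * a₁ - a₂ + 2 ↔ a₁ ≤ (s + 1) * a₂ + 2) := by
  have he0 : 0 ≤ e := by omega
  set N : ℤ := (s + 2) * e with hN
  have hN0 : 0 ≤ N := mul_nonneg (by omega) he0
  have hres : res ((s + 2, s * a₁ + 2 + e + N) : ℤ × ℤ) = res ((α, β + N) : ℤ × ℤ) := by
    have h1 : ((s + 2, s * a₁ + 2 + e + N) : ℤ × ℤ)
        = s • ((1 : ℤ), a₁) + (2, 2 + e + N) := by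
      simp [Prod.ext_iff, smul_eq_mul]; ring
    have h2' : ((α, β + N) : ℤ × ℤ) = ((α, β) + (-2, -2 - e)) + (2, 2 + e + N) := by
      simp [Prod.ext_iff]; ring
    rw [h1, h2', map_add, map_add, hsub]
  have hkey : ((s + 2, s * a₁ + 2 + e + N) : ℤ × ℤ) = (α, β + N) := by
    apply hinj _ _ (by simp; omega) _ hα _ hres
    · show (s + 2) * e < s * a₁ + 2 + e + N
      have : 0 ≤ s * a₁ := mul_nonneg (by omega) (by omega)
      omega
    · show α * e < β + N
      linarith
  have h1 : α = s + 2 := by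
    have := congrArg Prod.fst hkey; simpa using this.symm
  have h2 : β = (s + 1) * a₁ - a₂ + 2 := by
    have hv : s * a₁ + 2 + e + N = β + N := congrArg Prod.snd hkey
    subst he; linarith
  subst h1 h2 he
  refine ⟨rfl, ?_, ?_, ?_, ?_⟩
  · simp [inter]
  · simp only [inter, Prod.mk_add_mk]; ring
  · simp only [inter, Prod.mk_add_mk]; ring
  · constructor <;> intro h <;> nlinarith
end
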